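/- Conversely, if (Q,+) is a Moufang loop and A : Q → Q satisfies A(x) ∈ K(Q) and -x+A(x) ∈ N(Q) for all x ∈ Q, then (x+A(x))+(y+z) = (x+y)+(A(x)+z) for all x,y,z. -/
import Mathlib


universe u

class Loop (Q : Type u) extends Add Q, Zero Q where
  addLeft_bijective : ∀ a : Q, Function.Bijective (fun x => a + x)
  addRight_bijective : ∀ a : Q, Function.Bijective (fun x => x + a)
  zero_add : ∀ a : Q, 0 + a = a
  add_zero : ∀ a : Q, a + 0 = a

/-- The commutant `C(Q)` of a loop. -/
def commutant (Q : Type u) [Loop Q] : Set Q := {a | ∀ x, a + x = x + a}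

/-- The Moufang center `K(Q)` of a loop. -/
def moufangCenter (Q : Type u) [Loop Q] : Set Q :=
  {a | ∀ x y, (a + a) + (x + y) = (a + x) + (a + y)}

/-- The nucleus `N(Q)` of a loop. -/
def nucleus (Q : Type u) [Loop Q] : Set Q :=
  {a | ∀ x y, ((a + x) + y = a + (x + y)) ∧ ((x + a) + y = x + (a + y)) ∧
    ((x + y) + a = x + (y + a))}

/-- The Moufang identity. -/
def IsMoufang (Q : Type u) [Loop Q] : Prop :=
  ∀ x y z : Q, x + (y + (x + z)) = ((x + y) + x) + z

section Aux

variable {Q : Type u} [Loop Q]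

theorem myLoop.left_cancel {a b c : Q} (h : a + b = a + c) : b = c :=
  (Loop.addLeft_bijective a).injective h

theorem myLoop.right_cancel {a b c : Q} (h : b + a = c + a) : b = c :=
  (Loop.addRight_bijective a).injective h

theorem myLoop.flex (hM : IsMoufang Q) (x y : Q) : x + (y + x) = (x + y) + x := by
  have h := hM x y 0
  rwa [Loop.add_zero, Loop.add_zero] at h

theorem myLoop.left_alt (hM : IsMoufang Q) (x z : Q) : x + (x + z) = (x + x) + z := by
  have h := hM x 0 z
  rwa [Loop.zero_add, Loop.add_zero] at h

variable (neg : Q → Q) (hneg : ∀ x : Q, x + neg x = 0) (hneg' : ∀ x : Q, neg x + x = 0)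

include neg hneg hneg'

theorem myLoop.lip0 (hM : IsMoufang Q) (x z : Q) : neg x + (x + z) = z := by
  have h := hM x (neg x) z
  rw [hneg, Loop.zero_add] at h
  exact myLoop.left_cancel h

theorem myLoop.neg_neg (x : Q) : neg (neg x) = x := by
  apply myLoop.left_cancel (a := neg x)
  rw [hneg (neg x), hneg' x]

theorem myLoop.lip (hM : IsMoufang Q) (x w : Q) : x + (neg x + w) = w := by
  have h := myLoop.lip0 neg hneg hneg' hM (neg x) w
  rwa [myLoop.neg_neg neg hneg hneg'] at h

theorem myLoop.rip'_raw (hM : IsMoufang Q) (x y : Q) : ((x + y) + x) + neg x = x + y := by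
  have h := hM x y (neg x)
  rw [hneg, Loop.add_zero] at h
  exact h.symm

theorem myLoop.rip_neg (hM : IsMoufang Q) (x w : Q) : (w + neg x) + x = w := by
  obtain ⟨y', hy'⟩ := (Loop.addRight_bijective x).surjective w
  obtain ⟨y, hy⟩ := (Loop.addLeft_bijective x).surjective y'
  have hw : (x + y) + x = w := by
    rw [show x + y = y' from hy]; exact hy'
  rw [← hw, myLoop.rip'_raw neg hneg hneg' hM]

theorem myLoop.rip (hM : IsMoufang Q) (x w : Q) : (w + x) + neg x = w := by
  have h := myLoop.rip_neg neg hneg hneg' hM (neg x) w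
  rwa [myLoop.neg_neg neg hneg hneg'] at h

theorem myLoop.neg_add (hM : IsMoufang Q) (x y : Q) : neg (x + y) = neg y + neg x := by
  have h1 : (x + y) + neg y = x := myLoop.rip neg hneg hneg' hM y x
  have h2 : neg (x + y) + x = neg y := by
    have h := myLoop.lip0 neg hneg hneg' hM (x + y) (neg y)
    rwa [h1] at h
  have h3 := myLoop.rip neg hneg hneg' hM x (neg (x + y))
  rw [h2] at h3
  exact h3.symm

theorem myLoop.neg_inj {a b : Q} (h : neg a = neg b) : a = b := by
  rw [← myLoop.neg_neg neg hneg hneg' a, h, myLoop.neg_neg neg hneg hneg']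

theorem myLoop.rightM (hM : IsMoufang Q) (x y z : Q) :
    ((z + x) + y) + x = z + (x + (y + x)) := by
  have h := hM (neg x) (neg y) (neg z)
  rw [← myLoop.neg_add neg hneg hneg' hM z x,
      ← myLoop.neg_add neg hneg hneg' hM (z + x) y,
      ← myLoop.neg_add neg hneg hneg' hM ((z + x) + y) x,
      ← myLoop.neg_add neg hneg hneg' hM y x,
      ← myLoop.neg_add neg hneg hneg' hM x (y + x),
      ← myLoop.neg_add neg hneg hneg' hM z (x + (y + x))] at h
  exact myLoop.neg_inj neg hneg hneg' h

theorem myLoop.midM (hM : IsMoufang Q) (x y z : Q) :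
    (x + y) + (z + x) = x + ((y + z) + x) := by
  have s1 : x + (y + z) = ((x + y) + x) + (neg x + z) := by
    have h := hM x y (neg x + z)
    rwa [myLoop.lip neg hneg hneg' hM x z] at h
  have s3 : x + ((neg x + z) + x) = z + x := by
    have h := hM x (neg x + z) 0
    rwa [Loop.add_zero, Loop.add_zero, myLoop.lip neg hneg hneg' hM x z] at h
  have s2 := myLoop.rightM neg hneg hneg' hM x (neg x + z) (x + y)
  have l : (x + (y + z)) + x = (x + y) + (z + x) := by
    rw [s1, s2, s3]
  rw [myLoop.flex hM x (y + z), l]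

theorem myLoop.comm {a : Q} (ha : a ∈ moufangCenter Q) (b : Q) : a + b = b + a := by
  obtain ⟨x, hx⟩ := (Loop.addLeft_bijective a).surjective b
  have hx : a + x = b := hx
  have h1 := ha x 0
  rw [Loop.add_zero, Loop.add_zero] at h1
  have h2 := ha 0 x
  rw [Loop.zero_add, Loop.add_zero] at h2
  rw [← hx, ← h2]
  exact h1

end Aux

theorem NK_char_backward (Q : Type u) [Loop Q] (hM : IsMoufang Q)
    (neg : Q → Q) (hneg : ∀ x : Q, x + neg x = 0) (hneg' : ∀ x : Q, neg x + x = 0)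
    (A : Q → Q) (hK : ∀ x : Q, A x ∈ moufangCenter Q)
    (hN : ∀ x : Q, neg x + A x ∈ nucleus Q) :
    ∀ x y z : Q, (x + A x) + (y + z) = (x + y) + (A x + z) := by
  intro x y z
  have hcom := myLoop.comm neg hneg hneg' (hK x)
  have hn := hN x
  have n1 : ∀ u v : Q, (u + (neg x + A x)) + v = u + ((neg x + A x) + v) :=
    fun u v => (hn u v).2.1
  have n2 : ∀ u v : Q, (u + v) + (neg x + A x) = u + (v + (neg x + A x)) :=
    fun u v => (hn u v).2.2
  have hxa : x + (neg x + A x) = A x := myLoop.lip neg hneg hneg' hM x (A x)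
  calc (x + A x) + (y + z)
      = (x + (x + (neg x + A x))) + (y + z) := by rw [hxa]
    _ = ((x + x) + (neg x + A x)) + (y + z) := by
          rw [myLoop.left_alt hM x (neg x + A x)]
    _ = (x + x) + ((neg x + A x) + (y + z)) := n1 (x + x) (y + z)
    _ = x + (x + ((neg x + A x) + (y + z))) :=
          (myLoop.left_alt hM x ((neg x + A x) + (y + z))).symm
    _ = x + ((x + (neg x + A x)) + (y + z)) := by rw [n1 x (y + z)]
    _ = x + (A x + (y + z)) := by rw [hxa]
    _ = x + ((y + z) + A x) := by rw [hcom (y + z)]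
    _ = x + ((y + z) + (x + (neg x + A x))) := by rw [hxa]
    _ = x + (((y + z) + x) + (neg x + A x)) := by rw [n2 (y + z) x]
    _ = (x + ((y + z) + x)) + (neg x + A x) := (n2 x ((y + z) + x)).symm
    _ = ((x + y) + (z + x)) + (neg x + A x) := by
          rw [← myLoop.midM neg hneg hneg' hM x y z]
    _ = (x + y) + ((z + x) + (neg x + A x)) := n2 (x + y) (z + x)
    _ = (x + y) + (z + (x + (neg x + A x))) := by rw [n2 z x]
    _ = (x + y) + (z + A x) := by rw [hxa]
    _ = (x + y) + (A x + z) := by rw [← hcom z]
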